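/- The center of the Lie algebra V^σ[G], i.e. {x ∈ V^σ[G] : [x,y]=0 for all y}, equals Vg_0 = {r g_0 : r ∈ V}, and has dimension 4 over F. -/

import Mathlib

namespace GGA

noncomputable section

variable (F : Type*) [Field F]

/-- The labelling `g_0, …, g_7` of the eight elements of `G = (ℤ/2ℤ)³`:
`g_0=(0,0,0), g_1=(1,0,0), g_2=(0,1,0), g_3=(0,0,1), g_4=(1,1,0), g_5=(0,1,1),
g_6=(1,1,1), g_7=(1,0,1)`. -/
def lab : Fin 8 → Fin 3 → ZMod 2 :=
  ![![0, 0, 0], ![1, 0, 0], ![0, 1, 0], ![0, 0, 1],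
    ![1, 1, 0], ![0, 1, 1], ![1, 1, 1], ![1, 0, 1]]

/-- `star i j` is the unique index `k ∈ {0,…,7}` with `g_i + g_j = g_k`
(the labelling `lab` is a bijection). -/
def star (i j : Fin 8) : Fin 8 := Function.invFun lab (lab i + lab j)

/-- The formula for `σ_{i,i+1}(r,s)`. -/
def f1 (r s : Fin 4 → F) : Fin 4 → F :=
  ![-(r 1 * s 0) - r 2 * s 2, -(r 1 * s 2) - r 2 * s 0,
    r 0 * s 1 + r 3 * s 3, r 0 * s 3 + r 3 * s 1]

/-- The formula for `σ_{i,i+2}(r,s)`. -/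
def f2 (r s : Fin 4 → F) : Fin 4 → F :=
  ![r 1 * s 2 + r 3 * s 3, -(r 0 * s 0) - r 2 * s 1,
    -(r 0 * s 1) - r 2 * s 0, r 1 * s 3 + r 3 * s 2]

/-- The formula for `σ_{i,i+4}(r,s)`. -/
def f4 (r s : Fin 4 → F) : Fin 4 → F :=
  ![-(r 0 * s 1) - r 1 * s 2, r 2 * s 0 + r 3 * s 3,
    -(r 0 * s 2) - r 1 * s 1, r 2 * s 3 + r 3 * s 0]

/-- The twist `σ : G × G → Bil(V × V, V)`, `V = F⁴`, written in terms of the indices: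
`σ i j r s = σ_{i,j}(r,s)`.  For `i, j ∈ I = {1,…,7}` the value depends on the
difference `j - i (mod 7)`, matching the definition
`σ_{i,i+1}, σ_{i,i+2}, σ_{i,i+4}` explicit, `σ_{0,i}=σ_{i,0}=σ_{0,0}=σ_{i,i}=0`,
`σ_{i,i+3}(r,s)=-σ_{i,i+4}(s,r)`, `σ_{i,i+5}(r,s)=-σ_{i,i+2}(s,r)`,
`σ_{i,i+6}(r,s)=-σ_{i,i+1}(s,r)`. -/
def sigma (i j : Fin 8) (r s : Fin 4 → F) : Fin 4 → F :=
  if i = 0 ∨ j = 0 ∨ i = j then 0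
  else if ((j : ℕ) + 7 - (i : ℕ)) % 7 = 1 then f1 F r s
  else if ((j : ℕ) + 7 - (i : ℕ)) % 7 = 2 then f2 F r s
  else if ((j : ℕ) + 7 - (i : ℕ)) % 7 = 3 then -f4 F s r
  else if ((j : ℕ) + 7 - (i : ℕ)) % 7 = 4 then f4 F r s
  else if ((j : ℕ) + 7 - (i : ℕ)) % 7 = 5 then -f2 F s r
  else -f1 F s r

/-- `single i r` is the formal sum `r gᵢ` in `V^σ[G]`, viewed as a function `G → V`. -/
def single (i : Fin 8) (r : Fin 4 → F) : Fin 8 → Fin 4 → F :=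
  fun k => if k = i then r else 0

/-- The product of `V^σ[G]`: the unique bilinear extension of
`[r gᵢ, s gⱼ] = σ_{i,j}(r,s) g_{i*j}`. -/
def bracket (x y : Fin 8 → Fin 4 → F) : Fin 8 → Fin 4 → F :=
  fun k => ∑ i : Fin 8, ∑ j : Fin 8, if star i j = k then sigma F i j (x i) (y j) else 0

/-! Bracketing `x` with `s g_j` isolates one component: the `g_{i*j}`-coefficient of
`[x, s g_j]` is `σ_{i,j}(x_i, s)`. So `x` is central iff every `σ_{i,j}(x_i, ·)` vanishes.
For `i ≠ 0` this fails unless `x_i = 0`, already for `j = i + 1`, because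
`σ_{i,i+1}(r, ·)` is nondegenerate in `r`; on the other hand `σ_{0,j} = 0`. -/

section

variable {F}

lemma lab_bijective : Function.Bijective lab :=
  (Fintype.bijective_iff_injective_and_card lab).mpr ⟨by decide, by decide⟩

lemma lab_star (i j : Fin 8) : lab (star i j) = lab i + lab j :=
  Function.rightInverse_invFun lab_bijective.2 _

lemma star_star_cancel_right (i j : Fin 8) : star (star i j) j = i := by
  apply lab_bijective.1
  rw [lab_star, lab_star, add_assoc, show lab j + lab j = 0 by revert j; decide, add_zero]

lemma sigma_zero_left (i j : Fin 8) (s : Fin 4 → F) : sigma F i j 0 s = 0 := by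
  unfold sigma
  split_ifs <;> ext c <;> fin_cases c <;> simp [f1, f2, f4]

lemma sigma_zero_right (i j : Fin 8) (r : Fin 4 → F) : sigma F i j r 0 = 0 := by
  unfold sigma
  split_ifs <;> ext c <;> fin_cases c <;> simp [f1, f2, f4]

lemma exists_sigma_eq_f1 {i : Fin 8} (hi : i ≠ 0) : ∃ j, sigma F i j = f1 F := by
  fin_cases i
  · exact absurd rfl hi
  exacts [⟨2, rfl⟩, ⟨3, rfl⟩, ⟨4, rfl⟩, ⟨5, rfl⟩, ⟨6, rfl⟩, ⟨7, rfl⟩, ⟨1, rfl⟩]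

lemma eq_zero_of_f1_eq_zero {r : Fin 4 → F} (h : ∀ s, f1 F r s = 0) : r = 0 := by
  -- `f1 r e₀ = (-r₁, -r₂, 0, 0)` and `f1 r e₁ = (0, 0, r₀, r₃)`
  have h₀ := congrFun (h ![1, 0, 0, 0])
  have h₁ := congrFun (h ![0, 1, 0, 0])
  ext c
  fin_cases c
  · simpa [f1] using h₁ 2
  · simpa [f1] using h₀ 0
  · simpa [f1] using h₀ 1
  · simpa [f1] using h₁ 3

lemma bracket_single_apply (x : Fin 8 → Fin 4 → F) (j : Fin 8) (s : Fin 4 → F) (k : Fin 8) :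
    bracket F x (single F j s) k = sigma F (star k j) j (x (star k j)) s := by
  have hinner : ∀ i, (∑ j', if star i j' = k then sigma F i j' (x i) (single F j s j') else 0)
      = if star i j = k then sigma F i j (x i) s else 0 := fun i =>
    (Fintype.sum_eq_single j fun j' hj' => by simp [single, hj', sigma_zero_right]).trans
      (by simp [single])
  rw [bracket, Fintype.sum_congr _ _ hinner, Fintype.sum_eq_single (star k j),
    if_pos (star_star_cancel_right k j)]
  intro i hi
  refine if_neg fun h => hi ?_
  rw [← h, star_star_cancel_right]

lemma bracket_single_zero_left (r : Fin 4 → F) (y : Fin 8 → Fin 4 → F) :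
    bracket F (single F 0 r) y = 0 := by
  ext k c
  refine congrFun (Finset.sum_eq_zero fun i _ => Finset.sum_eq_zero fun j _ => ?_) c
  rcases eq_or_ne i 0 with rfl | hi
  · simp [sigma]
  · simp [single, hi, sigma_zero_left]

lemma eq_single_zero_of_forall_bracket_eq_zero {x : Fin 8 → Fin 4 → F}
    (hx : ∀ y, bracket F x y = 0) : x = single F 0 (x 0) := by
  ext k : 1
  by_cases hk : k = 0
  · simp [single, hk]
  rw [single, if_neg hk]
  obtain ⟨j, hj⟩ := exists_sigma_eq_f1 (F := F) hk
  refine eq_zero_of_f1_eq_zero fun s => ?_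
  have hcoeff := congrFun (hx (single F j s)) (star k j)
  rwa [bracket_single_apply, star_star_cancel_right, hj] at hcoeff

lemma finrank_span_single (i : Fin 8) :
    Module.finrank F
      (Submodule.span F {x : Fin 8 → Fin 4 → F | ∃ r : Fin 4 → F, x = single F i r}) = 4 := by
  have hrange : {x : Fin 8 → Fin 4 → F | ∃ r : Fin 4 → F, x = single F i r}
      = Set.range (LinearMap.single F (fun _ : Fin 8 => Fin 4 → F) i) := by
    ext x
    constructor <;> rintro ⟨r, rfl⟩ <;> exact ⟨r, by ext k : 1; simp [single, Pi.single_apply]⟩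
  rw [hrange, ← LinearMap.coe_range, Submodule.span_eq,
    (LinearMap.single F _ i).finrank_range_of_inj fun _ _ h => Pi.single_injective i h]
  simp

end

theorem center_of_d4_gga :
    {x : Fin 8 → Fin 4 → F | ∀ y, bracket F x y = 0}
      = {x : Fin 8 → Fin 4 → F | ∃ r : Fin 4 → F, x = single F 0 r} ∧
    Module.finrank F
      ↥(Submodule.span F {x : Fin 8 → Fin 4 → F | ∃ r : Fin 4 → F, x = single F 0 r}) = 4 := by
  refine ⟨Set.ext fun x => ⟨fun hx => ⟨x 0, eq_single_zero_of_forall_bracket_eq_zero hx⟩, ?_⟩,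
    finrank_span_single 0⟩
  rintro ⟨r, rfl⟩ y
  exact bracket_single_zero_left r y

end
end GGA
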